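/- arXiv:quant-ph/0308022 — 4 statements merged into one kernel-verified Lean document; each statement's English description precedes it below -/
import Mathlib

section
/- Let (w,v,u,γ) be an error correcting scheme with distinguished syndrome e, and let (E,D) be the associated quantum error correcting code. Then for every noisy channel T ∈ 𝒯 (i.e. every unital linear map T(a) = Σ_{x,y∈X} t_{x,y} w_x^* a w_y with (t_{x,y}) positive semidefinite), the composition satisfies E(T(D(b))) = b for all b ∈ B(𝒦); that is, E∘T∘D = id_{B(𝒦)}. -/
open scoped BigOperators ComplexOrder

noncomputable section

variable {K H : Type*} [NormedAddCommGroup K] [InnerProductSpace ℂ K] [FiniteDimensional ℂ K]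
  [NormedAddCommGroup H] [InnerProductSpace ℂ H] [FiniteDimensional ℂ H]
variable {X G Hc : Type*} [Fintype X] [Fintype G] [Fintype Hc] [DecidableEq G] [DecidableEq Hc]

/-- `n(g,h)`: the number of error labels `x` with `γ(x,g,h) = 0`. -/
def nGH (γ : X → G → Hc → Fin 2) (g : G) (h : Hc) : ℕ :=
  (Finset.univ.filter fun x => γ x g h = 0).card

/-- The classical analysis function `c` of the syndrome table `γ` (with default
correction label `ι`). -/
def cCoef (γ : X → G → Hc → Fin 2) (ι : Hc) (x : X) (g : G) (h : Hc) : ℂ :=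
  if γ x g h = 0 then ((nGH γ g h : ℂ))⁻¹
  else if ∀ x' h', γ x' g h' ≠ 0 then ((Fintype.card X : ℂ))⁻¹ * (if ι = h then 1 else 0)
  else 0

/-- The correction channel `C` (Heisenberg picture): it maps an input observable `b`
to the operator-valued function `g ↦ Σ_{x,h} c(x,g,h) u_h b u_h^*` on syndromes. -/
def corrC (u : Hc → (K →ₗ[ℂ] K)) (γ : X → G → Hc → Fin 2) (ι : Hc)
    (b : K →ₗ[ℂ] K) : G → (K →ₗ[ℂ] K) :=
  fun g => ∑ x : X, ∑ h : Hc, cCoef γ ι x g h • (u h ∘ₗ b ∘ₗ LinearMap.adjoint (u h))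

/-- The syndrome measurement channel `S`: it maps an operator-valued function `b` on
syndromes to `Σ_g v_g b(g) v_g^*`. -/
def synS (v : G → (K →ₗ[ℂ] H)) (b : G → (K →ₗ[ℂ] K)) : H →ₗ[ℂ] H :=
  ∑ g : G, v g ∘ₗ b g ∘ₗ LinearMap.adjoint (v g)

/-- The decoder `D = S ∘ C`. -/
def decD (v : G → (K →ₗ[ℂ] H)) (u : Hc → (K →ₗ[ℂ] K)) (γ : X → G → Hc → Fin 2) (ι : Hc)
    (b : K →ₗ[ℂ] K) : H →ₗ[ℂ] H :=
  synS v (corrC u γ ι b)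

private lemma lm_sum_comp {A B C : Type*} [AddCommGroup A] [Module ℂ A]
    [AddCommGroup B] [Module ℂ B] [AddCommGroup C] [Module ℂ C]
    {I : Type*} (s : Finset I) (f : I → (B →ₗ[ℂ] C)) (g : A →ₗ[ℂ] B) :
    (∑ i ∈ s, f i) ∘ₗ g = ∑ i ∈ s, f i ∘ₗ g := by
  ext k; simp [LinearMap.sum_apply]

private lemma lm_comp_sum {A B C : Type*} [AddCommGroup A] [Module ℂ A]
    [AddCommGroup B] [Module ℂ B] [AddCommGroup C] [Module ℂ C]
    {I : Type*} (s : Finset I) (f : I → (A →ₗ[ℂ] B)) (g : B →ₗ[ℂ] C) :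
    g ∘ₗ (∑ i ∈ s, f i) = ∑ i ∈ s, g ∘ₗ f i := by
  ext k; simp [LinearMap.sum_apply, map_sum]

/-- For an error correcting scheme `(w,v,u,γ)` with distinguished
syndrome `e`, with associated encoder `E(a) = v_e^* a v_e` and decoder `D = S ∘ C`,
every noisy channel `T(a) = Σ_{x,y} t_{x,y} w_x^* a w_y` (with `t` positive
semidefinite and `T` unital) is completely corrected: `E ∘ T ∘ D = id`. -/
theorem scheme_encode_noise_decode_eq_id
    (w : X → (H →ₗ[ℂ] H)) (v : G → (K →ₗ[ℂ] H)) (u : Hc → (K →ₗ[ℂ] K))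
    (γ : X → G → Hc → Fin 2) (e : G) (ι : Hc)
    (hw_li : LinearIndependent ℂ w)
    (hw_unitary : ∀ x, w x ∘ₗ LinearMap.adjoint (w x) = 1 ∧
      LinearMap.adjoint (w x) ∘ₗ w x = 1)
    (hv_orth : ∀ g g', LinearMap.adjoint (v g) ∘ₗ v g' =
      if g = g' then (1 : K →ₗ[ℂ] K) else 0)
    (hv_complete : ∑ g : G, v g ∘ₗ LinearMap.adjoint (v g) = 1)
    (hu_unitary : ∀ h, u h ∘ₗ LinearMap.adjoint (u h) = 1 ∧
      LinearMap.adjoint (u h) ∘ₗ u h = 1)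
    (hγ1 : ∀ x g h, γ x g h = 0 → w x ∘ₗ v e = v g ∘ₗ u h)
    (hγ2 : ∀ x, ∃ g h, γ x g h = 0)
    (hγ3 : ∀ x x' g h h', γ x g h = 0 → γ x' g h' = 0 → h = h')
    (t : Matrix X X ℂ) (ht : t.PosSemidef)
    (hT_unital : ∑ x : X, ∑ y : X,
      t x y • (LinearMap.adjoint (w x) ∘ₗ w y) = (1 : H →ₗ[ℂ] H)) :
    ∀ b : K →ₗ[ℂ] K,
      LinearMap.adjoint (v e) ∘ₗ
          (∑ x : X, ∑ y : X,
            t x y • (LinearMap.adjoint (w x) ∘ₗ decD v u γ ι b ∘ₗ w y)) ∘ₗ v e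
        = b := by
  classical
  intro b
  choose g0 h0 hγ0 using hγ2
  have hwv : ∀ x, w x ∘ₗ v e = v (g0 x) ∘ₗ u (h0 x) := fun x => hγ1 _ _ _ (hγ0 x)
  have hadj : ∀ x, LinearMap.adjoint (v e) ∘ₗ LinearMap.adjoint (w x)
      = LinearMap.adjoint (u (h0 x)) ∘ₗ LinearMap.adjoint (v (g0 x)) := by
    intro x
    rw [← LinearMap.adjoint_comp, ← LinearMap.adjoint_comp, hwv x]
  have hh : ∀ x y, g0 x = g0 y → h0 x = h0 y := fun x y hg =>
    hγ3 x y (g0 x) _ _ (hγ0 x) (hg ▸ hγ0 y)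
  -- C(b)(g0 x) = u (h0 x) ∘ b ∘ u (h0 x)^*
  have hC : ∀ x, corrC u γ ι b (g0 x)
      = u (h0 x) ∘ₗ b ∘ₗ LinearMap.adjoint (u (h0 x)) := by
    intro x
    have hne : ¬ ∀ x' h', γ x' (g0 x) h' ≠ 0 := fun H' => H' x (h0 x) (hγ0 x)
    unfold corrC
    rw [Finset.sum_comm]
    have hc : ∀ x' h, cCoef γ ι x' (g0 x) h
        = if γ x' (g0 x) h = 0 then ((nGH γ (g0 x) h : ℂ))⁻¹ else 0 := by
      intro x' h
      unfold cCoef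
      by_cases h1 : γ x' (g0 x) h = 0 <;> simp [h1, hne]
    have hsum : ∀ h : Hc,
        (∑ x' : X, (if γ x' (g0 x) h = 0 then ((nGH γ (g0 x) h : ℂ))⁻¹ else 0))
        = if h = h0 x then 1 else 0 := by
      intro h
      rw [← Finset.sum_filter, Finset.sum_const]
      have hcard : (Finset.univ.filter fun x' => γ x' (g0 x) h = 0).card
          = nGH γ (g0 x) h := rfl
      rw [hcard, nsmul_eq_mul]
      by_cases hh0 : h = h0 x
      · have hpos : 0 < nGH γ (g0 x) h :=
          Finset.card_pos.mpr ⟨x, Finset.mem_filter.mpr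
            ⟨Finset.mem_univ x, by rw [hh0]; exact hγ0 x⟩⟩
        have hne0 : (nGH γ (g0 x) h : ℂ) ≠ 0 := by exact_mod_cast hpos.ne'
        rw [mul_inv_cancel₀ hne0, if_pos hh0]
      · have hzero : nGH γ (g0 x) h = 0 := by
          apply Finset.card_eq_zero.mpr
          rw [Finset.filter_eq_empty_iff]
          intro x' _
          exact fun hx' => hh0 (hγ3 x' x (g0 x) h (h0 x) hx' (hγ0 x))
        rw [hzero, if_neg hh0]
        simp
    have step : ∀ h : Hc,
        (∑ x' : X, cCoef γ ι x' (g0 x) h •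
          (u h ∘ₗ b ∘ₗ LinearMap.adjoint (u h)))
        = (if h = h0 x then (1 : ℂ) else 0) •
            (u h ∘ₗ b ∘ₗ LinearMap.adjoint (u h)) := by
      intro h
      simp only [hc]
      rw [← Finset.sum_smul, hsum h]
    rw [Finset.sum_congr rfl fun h _ => step h]
    simp only [ite_smul, one_smul, zero_smul]
    rw [Finset.sum_ite_eq' Finset.univ (h0 x)
      (fun h => u h ∘ₗ b ∘ₗ LinearMap.adjoint (u h)), if_pos (Finset.mem_univ _)]
  -- conjugation transport lemma
  have conj : ∀ x y (M : H →ₗ[ℂ] H),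
      LinearMap.adjoint (v e) ∘ₗ (LinearMap.adjoint (w x) ∘ₗ M ∘ₗ w y) ∘ₗ v e
      = LinearMap.adjoint (u (h0 x)) ∘ₗ
          (LinearMap.adjoint (v (g0 x)) ∘ₗ M ∘ₗ v (g0 y)) ∘ₗ u (h0 y) := by
    intro x y M
    calc LinearMap.adjoint (v e) ∘ₗ (LinearMap.adjoint (w x) ∘ₗ M ∘ₗ w y) ∘ₗ v e
        = (LinearMap.adjoint (v e) ∘ₗ LinearMap.adjoint (w x)) ∘ₗ
            M ∘ₗ (w y ∘ₗ v e) := by simp only [LinearMap.comp_assoc]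
      _ = (LinearMap.adjoint (u (h0 x)) ∘ₗ LinearMap.adjoint (v (g0 x))) ∘ₗ
            M ∘ₗ (v (g0 y) ∘ₗ u (h0 y)) := by rw [hadj x, hwv y]
      _ = _ := by simp only [LinearMap.comp_assoc]
  -- collapse of the syndrome sum
  have collapse : ∀ x y,
      LinearMap.adjoint (v (g0 x)) ∘ₗ decD v u γ ι b ∘ₗ v (g0 y)
      = if g0 x = g0 y then corrC u γ ι b (g0 x) else 0 := by
    intro x y
    unfold decD synS
    rw [lm_sum_comp, lm_comp_sum]
    have hterm : ∀ g : G,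
        LinearMap.adjoint (v (g0 x)) ∘ₗ
          ((v g ∘ₗ corrC u γ ι b g ∘ₗ LinearMap.adjoint (v g)) ∘ₗ v (g0 y))
        = if g0 x = g then (if g = g0 y then corrC u γ ι b g else 0) else 0 := by
      intro g
      have hassoc : LinearMap.adjoint (v (g0 x)) ∘ₗ
          ((v g ∘ₗ corrC u γ ι b g ∘ₗ LinearMap.adjoint (v g)) ∘ₗ v (g0 y))
          = (LinearMap.adjoint (v (g0 x)) ∘ₗ v g) ∘ₗ
              corrC u γ ι b g ∘ₗ (LinearMap.adjoint (v g) ∘ₗ v (g0 y)) := by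
        simp only [LinearMap.comp_assoc]
      rw [hassoc, hv_orth, hv_orth]
      by_cases h1 : g0 x = g
      · by_cases h2 : g = g0 y
        · subst h2
          simp [h1, Module.End.one_eq_id, LinearMap.id_comp, LinearMap.comp_id]
        · simp [h1, h2, Module.End.one_eq_id, LinearMap.id_comp, LinearMap.comp_id]
      · simp [h1]
    rw [Finset.sum_congr rfl fun g _ => hterm g]
    rw [Finset.sum_ite_eq Finset.univ (g0 x)
      (fun g => if g = g0 y then corrC u γ ι b g else 0), if_pos (Finset.mem_univ _)]
  -- key term computation
  have key : ∀ x y,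
      LinearMap.adjoint (v e) ∘ₗ
        (LinearMap.adjoint (w x) ∘ₗ decD v u γ ι b ∘ₗ w y) ∘ₗ v e
      = (if g0 x = g0 y then (1 : ℂ) else 0) • b := by
    intro x y
    rw [conj x y, collapse x y]
    by_cases hg : g0 x = g0 y
    · rw [if_pos hg, if_pos hg, one_smul, hC x, hh x y hg]
      calc LinearMap.adjoint (u (h0 y)) ∘ₗ
            (u (h0 y) ∘ₗ b ∘ₗ LinearMap.adjoint (u (h0 y))) ∘ₗ u (h0 y)
          = (LinearMap.adjoint (u (h0 y)) ∘ₗ u (h0 y)) ∘ₗ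
              b ∘ₗ (LinearMap.adjoint (u (h0 y)) ∘ₗ u (h0 y)) := by
            simp only [LinearMap.comp_assoc]
        _ = b := by
            simp only [(hu_unitary (h0 y)).2, Module.End.one_eq_id, LinearMap.id_comp, LinearMap.comp_id]
    · rw [if_neg hg, if_neg hg, zero_smul]
      simp
  -- the unitality identity conjugated down
  have key1 : ∀ x y,
      LinearMap.adjoint (v e) ∘ₗ (LinearMap.adjoint (w x) ∘ₗ w y) ∘ₗ v e
      = (if g0 x = g0 y then (1 : ℂ) else 0) • (1 : K →ₗ[ℂ] K) := by
    intro x y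
    have h1 : LinearMap.adjoint (w x) ∘ₗ w y
        = LinearMap.adjoint (w x) ∘ₗ (1 : H →ₗ[ℂ] H) ∘ₗ w y := by
      rw [Module.End.one_eq_id, LinearMap.id_comp]
    rw [h1, conj x y, Module.End.one_eq_id, LinearMap.id_comp, hv_orth]
    by_cases hg : g0 x = g0 y
    · rw [if_pos hg, if_pos hg, one_smul, hh x y hg]
      simp only [Module.End.one_eq_id, LinearMap.id_comp]
      rw [← Module.End.one_eq_id]
      exact (hu_unitary (h0 y)).2
    · rw [if_neg hg, if_neg hg, zero_smul]
      simp
  set c : ℂ := ∑ x : X, ∑ y : X, t x y * (if g0 x = g0 y then (1 : ℂ) else 0)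
    with hc_def
  have hunital : c • (1 : K →ₗ[ℂ] K) = 1 := by
    have h2 := congrArg
      (fun M : H →ₗ[ℂ] H => LinearMap.adjoint (v e) ∘ₗ M ∘ₗ v e) hT_unital
    simp only [lm_sum_comp, lm_comp_sum, LinearMap.smul_comp,
      LinearMap.comp_smul] at h2
    simp only [key1, smul_smul] at h2
    have hre : LinearMap.adjoint (v e) ∘ₗ (1 : H →ₗ[ℂ] H) ∘ₗ v e
        = (1 : K →ₗ[ℂ] K) := by
      rw [Module.End.one_eq_id, LinearMap.id_comp, hv_orth, if_pos rfl]
    rw [hre] at h2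
    rw [hc_def]
    simp only [Finset.sum_smul]
    exact h2
  calc LinearMap.adjoint (v e) ∘ₗ
      (∑ x : X, ∑ y : X,
        t x y • (LinearMap.adjoint (w x) ∘ₗ decD v u γ ι b ∘ₗ w y)) ∘ₗ v e
      = ∑ x : X, ∑ y : X, t x y •
          (LinearMap.adjoint (v e) ∘ₗ
            (LinearMap.adjoint (w x) ∘ₗ decD v u γ ι b ∘ₗ w y) ∘ₗ v e) := by
        simp only [lm_sum_comp, lm_comp_sum, LinearMap.smul_comp,
          LinearMap.comp_smul]
    _ = ∑ x : X, ∑ y : X,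
          (t x y * (if g0 x = g0 y then (1 : ℂ) else 0)) • b := by
        simp only [key, smul_smul]
    _ = c • b := by rw [hc_def]; simp only [Finset.sum_smul]
    _ = b := by
        have hcb : c • b = (c • (1 : K →ₗ[ℂ] K)) ∘ₗ b := by
          rw [LinearMap.smul_comp, Module.End.one_eq_id, LinearMap.id_comp]
        rw [hcb, hunital, Module.End.one_eq_id, LinearMap.id_comp]
end
end

section
/- Let Λ be an admissible graph. For every ξ^J = (p^J,q^J) ∈ Ξ^J there exist q^L ∈ F^L and ξ^I = (p^I,q^I) ∈ Ξ^I with γ_Λ(ξ^J,q^L,ξ^I) = 0; moreover this solution is unique and given explicitly by (q^I,q^L) = Λ̄^{IL}_J (p^J − Λ^J_J q^J) and p^I = Λ^I_J q^J, where Λ̄^{IL}_J denotes the inverse of the block matrix Λ^J_{IL}. -/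
open scoped BigOperators

noncomputable section

/-- The Hilbert space `H_K` of complex functions on the configurations `F^K`. -/
abbrev HS (F K : Type*) : Type _ := (K → F) → ℂ

/-- The linear map on function spaces given by an integral kernel. -/
def kernelMap {α β : Type*} [Fintype α] (k : β → α → ℂ) : (α → ℂ) →ₗ[ℂ] (β → ℂ) where
  toFun ψ := fun b => ∑ a, k b a * ψ a
  map_add' ψ φ := by
    funext b
    simp only [Pi.add_apply, mul_add, Finset.sum_add_distrib]
  map_smul' c ψ := by
    funext b
    simp only [Pi.smul_apply, smul_eq_mul, RingHom.id_apply, Finset.mul_sum]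
    exact Finset.sum_congr rfl fun _ _ => by ring

/-- The operator of multiplication by a fixed function. -/
def mulFun {α : Type*} (f : α → ℂ) : (α → ℂ) →ₗ[ℂ] (α → ℂ) where
  toFun ψ := fun a => f a * ψ a
  map_add' ψ φ := by funext a; simp [mul_add]
  map_smul' c ψ := by funext a; simp; ring

/-- The pullback (precomposition) operator along a map of configuration spaces. -/
def compMap {α β : Type*} (σ : β → α) : (α → ℂ) →ₗ[ℂ] (β → ℂ) where
  toFun ψ := fun b => ψ (σ b)
  map_add' _ _ := rfl
  map_smul' _ _ := rfl

variable {F : Type*} [Field F] [Fintype F] [DecidableEq F]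

/-- `ε` is an injective character of the additive group of `F` into the unit circle. -/
def IsCharacter (ε : F → ℂ) : Prop :=
  Function.Injective ε ∧ (∀ a, ‖ε a‖ = 1) ∧ ∀ a b, ε (a + b) = ε a * ε b

/-- The symmetric bicharacter `χ(p,q) = Π_k ε(p_k q_k)`. -/
def chi (ε : F → ℂ) {K : Type*} [Fintype K] (p q : K → F) : ℂ := ∏ k, ε (p k * q k)

/-- The shift operator `x(q)`, `(x(q)ψ)(q₁) = ψ(q₁ - q)`. -/
def shiftOp {K : Type*} (q : K → F) : HS F K →ₗ[ℂ] HS F K :=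
  compMap (fun q₁ => q₁ - q)

/-- The multiplier operator `z(p)`, `(z(p)ψ)(q₁) = χ(p,q₁)ψ(q₁)`. -/
def multOp (ε : F → ℂ) {K : Type*} [Fintype K] (p : K → F) : HS F K →ₗ[ℂ] HS F K :=
  mulFun (chi ε p)

/-- The Weyl operator `w(ξ) = z(p)x(q)` of the phase space point `ξ = (p,q)`. -/
def weylOp (ε : F → ℂ) {K : Type*} [Fintype K] (ξ : (K → F) × (K → F)) :
    HS F K →ₗ[ℂ] HS F K :=
  multOp ε ξ.1 ∘ₗ shiftOp ξ.2

/-- The normalization constant `d^(-n/2)` (where `d = |F|`) as a complex number. -/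
def rnorm (F : Type*) [Fintype F] (n : ℕ) : ℂ :=
  (((Fintype.card F : ℝ) ^ (-(n : ℝ) / 2) : ℝ) : ℂ)

/-- The Haar-normalized inner product on `H_K`:
`⟨ψ,φ⟩ = d^(-|K|) Σ_q conj(ψ q) φ q`. -/
def hinner {K : Type*} [Fintype K] [DecidableEq K] (ψ φ : HS F K) : ℂ :=
  ((Fintype.card F : ℂ) ^ (Fintype.card K))⁻¹ *
    ∑ q : K → F, (starRingEnd ℂ) (ψ q) * φ q

/-- The delta-function basis vector located at `q`. -/
def deltaV {K : Type*} [Fintype K] [DecidableEq K] (q : K → F) : HS F K :=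
  fun q' => if q' = q then 1 else 0

/-- The adjoint of an operator with respect to the Haar-normalized inner
products `hinner` on source and target. -/
def hAdj {K M : Type*} [Fintype K] [Fintype M] [DecidableEq K] [DecidableEq M]
    (A : HS F K →ₗ[ℂ] HS F M) : HS F M →ₗ[ℂ] HS F K :=
  kernelMap (fun qK qM =>
    (Fintype.card F : ℂ) ^ (Fintype.card K) * ((Fintype.card F : ℂ) ^ (Fintype.card M))⁻¹ *
      (starRingEnd ℂ) (A (deltaV qK) qM))

variable {I J L : Type*} [Fintype I] [Fintype J] [Fintype L]
  [DecidableEq I] [DecidableEq J] [DecidableEq L]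

/-- Combining configurations on `I`, `J`, `L` into one on `I ⊕ J ⊕ L`. -/
def combine (qI : I → F) (qJ : J → F) (qL : L → F) : (I ⊕ J ⊕ L) → F :=
  Sum.elim qI (Sum.elim qJ qL)

/-- Inclusion of the input vertices. -/
def inI : I → I ⊕ J ⊕ L := Sum.inl
/-- Inclusion of the output vertices. -/
def inJ : J → I ⊕ J ⊕ L := fun j => Sum.inr (Sum.inl j)
/-- Inclusion of the syndrome vertices. -/
def inL : L → I ⊕ J ⊕ L := fun l => Sum.inr (Sum.inr l)
/-- Inclusion of the input and syndrome vertices. -/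
def embIL : I ⊕ L → I ⊕ J ⊕ L := Sum.elim inI inL

/-- The `J`-rows of `Λ` applied to a full configuration (`Λ^J_{IJL} q^{IJL}`). -/
def appJ (Λ : Matrix (I ⊕ J ⊕ L) (I ⊕ J ⊕ L) F) (v : (I ⊕ J ⊕ L) → F) : J → F :=
  fun j => Λ.mulVec v (inJ j)

/-- The `I`-rows of `Λ` applied to a full configuration (`Λ^I_{IJL} q^{IJL}`). -/
def appI (Λ : Matrix (I ⊕ J ⊕ L) (I ⊕ J ⊕ L) F) (v : (I ⊕ J ⊕ L) → F) : I → F :=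
  fun i => Λ.mulVec v (inI i)

/-- The block `Λ^J_{IL}` (rows in `J`, columns in `I ∪ L`). -/
def blockJIL (Λ : Matrix (I ⊕ J ⊕ L) (I ⊕ J ⊕ L) F) : Matrix J (I ⊕ L) F :=
  fun j il => Λ (inJ j) (embIL il)

/-- A weighted graph (adjacency matrix) is admissible: it is symmetric, the block
`Λ^J_{IL}` is invertible and the block `Λ^{IL}_{IL}` vanishes. -/
def Admissible (Λ : Matrix (I ⊕ J ⊕ L) (I ⊕ J ⊕ L) F) : Prop :=
  Λ.IsSymm ∧ (∃ B : Matrix (I ⊕ L) J F, blockJIL Λ * B = 1 ∧ B * blockJIL Λ = 1) ∧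
    ∀ a b : I ⊕ L, Λ (embIL a) (embIL b) = 0

/-- `τ(Λ,·)` is a family of unimodular phases forming a one-dimensional projective
representation: `τ(q₁+q₂) = τ(q₁)τ(q₂)χ(Λq₁,q₂)`. -/
def IsTau (ε : F → ℂ) (Λ : Matrix (I ⊕ J ⊕ L) (I ⊕ J ⊕ L) F)
    (tau : ((I ⊕ J ⊕ L) → F) → ℂ) : Prop :=
  (∀ q, ‖tau q‖ = 1) ∧
    ∀ q₁ q₂, tau (q₁ + q₂) = tau q₁ * tau q₂ * chi ε (Λ.mulVec q₁) q₂

/-- The graph code operator `v_{[Λ,q^L]} : H_I → H_J`,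
`(v ψ)(q^J) = d^(-|I|/2) Σ_{q^I} τ(Λ, q^{IJL}) ψ(q^I)`. -/
def gcode (tau : ((I ⊕ J ⊕ L) → F) → ℂ) (qL : L → F) : HS F I →ₗ[ℂ] HS F J :=
  kernelMap (fun qJ qI => rnorm F (Fintype.card I) * tau (combine qI qJ qL))

/-- The syndrome-table condition `γ_Λ(ξ^J, q^L, ξ^I) = 0`:
`p^J = Λ^J_{IJL} q^{IJL}` and `p^I = Λ^I_J q^J`. -/
def GammaZero (Λ : Matrix (I ⊕ J ⊕ L) (I ⊕ J ⊕ L) F)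
    (pJ qJ : J → F) (qL : L → F) (pI qI : I → F) : Prop :=
  pJ = appJ Λ (combine qI qJ qL) ∧ pI = appI Λ (combine 0 qJ 0)

/-- The weight of a phase space vector `ξ^J = (p^J,q^J)`. -/
def wt {J : Type*} [Fintype J] (pJ qJ : J → F) : ℕ :=
  (Finset.univ.filter fun j => ¬(pJ j = 0 ∧ qJ j = 0)).card

/-- `Λ` is associated with a `t`-error correcting code: for every set `E ⊆ J` with
at most `2t` elements, `Λ^{J∖E}_{IE} q^{IE} = 0` implies `q^I = 0` and
`Λ^I_E q^E = 0`. -/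
def TCode (Λ : Matrix (I ⊕ J ⊕ L) (I ⊕ J ⊕ L) F) (t : ℕ) : Prop :=
  ∀ E : Finset J, E.card ≤ 2 * t → ∀ (qI : I → F) (qJ : J → F),
    (∀ j ∉ E, qJ j = 0) →
    (∀ j ∉ E, appJ Λ (combine qI qJ 0) j = 0) →
    qI = 0 ∧ appI Λ (combine 0 qJ 0) = 0

/-- Tensoring with the standard (shift invariant) vector `Ω_K ≡ 1`:
the isometry `Φ_K : H_M → H_{M⊕K}`, `(Φψ)(q) = ψ(q∘inl)`. -/
def tensOmega {M K : Type*} : HS F M →ₗ[ℂ] HS F (M ⊕ K) :=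
  compMap (fun q => q ∘ Sum.inl)

/-- The Fourier transform acting on the `K`-factor of `H_{M⊕K}`. -/
def fourierR (ε : F → ℂ) {M K : Type*} [Fintype K] [DecidableEq K] :
    HS F (M ⊕ K) →ₗ[ℂ] HS F (M ⊕ K) where
  toFun φ := fun q => ∑ qK' : K → F,
    rnorm F (Fintype.card K) * chi ε (q ∘ Sum.inr) qK' * φ (Sum.elim (q ∘ Sum.inl) qK')
  map_add' φ₁ φ₂ := by
    funext q
    simp only [Pi.add_apply, mul_add, Finset.sum_add_distrib]
  map_smul' c φ := by
    funext q
    simp only [Pi.smul_apply, smul_eq_mul, RingHom.id_apply, Finset.mul_sum]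
    exact Finset.sum_congr rfl fun _ _ => by ring

/-- The multiplier `z(p)` acting on the `K`-factor of `H_{M⊕K}`. -/
def zR (ε : F → ℂ) {M K : Type*} [Fintype K] (p : K → F) :
    HS F (M ⊕ K) →ₗ[ℂ] HS F (M ⊕ K) :=
  mulFun (fun q => chi ε p (q ∘ Sum.inr))

/-- The selected error `ξ^I_{[q^L]}`: the unique `ξ^I` such that
`γ_Λ(ξ^J, q^L, ξ^I) = 0` for some `ξ^J` of weight at most `t`, if such exists,
and `(0,0)` otherwise. -/
def xiSel (Λ : Matrix (I ⊕ J ⊕ L) (I ⊕ J ⊕ L) F) (t : ℕ) (qL : L → F) :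
    (I → F) × (I → F) :=
  @dite _ (∃ ξI : (I → F) × (I → F), ∃ pJ qJ : J → F,
      wt pJ qJ ≤ t ∧ GammaZero Λ pJ qJ qL ξI.1 ξI.2)
    (Classical.dec _) (fun h => h.choose) (fun _ => (0, 0))

/-! Splitting `q^{IJL}` into its `J`-part and its `IL`-part turns the first syndrome-table
equation into the linear system `Λ^J_{IL} q^{IL} = p^J - Λ^J_J q^J`, which the inverse `Λ̄`
of `Λ^J_{IL}` solves uniquely; the second equation is already an explicit formula for `p^I`. -/

open scoped Matrix

theorem Matrix.mulVec_eq_iff_eq_mulVec_of_mul_eq_one {m n R : Type*} [Fintype m] [Fintype n]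
    [DecidableEq m] [DecidableEq n] [Semiring R] {A : Matrix m n R} {B : Matrix n m R}
    (hAB : A * B = 1) (hBA : B * A = 1) {x : n → R} {b : m → R} :
    A *ᵥ x = b ↔ x = B *ᵥ b := by
  constructor
  · rintro rfl
    rw [Matrix.mulVec_mulVec, hBA, Matrix.one_mulVec]
  · rintro rfl
    rw [Matrix.mulVec_mulVec, hAB, Matrix.one_mulVec]

theorem appJ_combine {F : Type*} [Field F] {I J L : Type*} [Fintype I] [Fintype J] [Fintype L]
    (Λ : Matrix (I ⊕ J ⊕ L) (I ⊕ J ⊕ L) F) (qI : I → F) (qJ : J → F) (qL : L → F) :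
    appJ Λ (combine qI qJ qL) =
      appJ Λ (combine 0 qJ 0) + blockJIL Λ *ᵥ Sum.elim qI qL := by
  funext j
  simp only [appJ, Matrix.mulVec, dotProduct, combine, blockJIL, embIL, inI, inL,
    Pi.add_apply, Fintype.sum_sum_type, Sum.elim_inl, Sum.elim_inr, Pi.zero_apply,
    mul_zero, Finset.sum_const_zero, zero_add, add_zero]
  ring

theorem gammaZero_iff_of_mul_eq_one {F : Type*} [Field F]
    {I J L : Type*} [Fintype I] [Fintype J] [Fintype L]
    [DecidableEq I] [DecidableEq J] [DecidableEq L]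
    {Λ : Matrix (I ⊕ J ⊕ L) (I ⊕ J ⊕ L) F} {Λbar : Matrix (I ⊕ L) J F}
    (hinv1 : blockJIL Λ * Λbar = 1) (hinv2 : Λbar * blockJIL Λ = 1)
    {pJ qJ : J → F} {qL : L → F} {pI qI : I → F} :
    GammaZero Λ pJ qJ qL pI qI ↔
      Sum.elim qI qL = Λbar *ᵥ (pJ - appJ Λ (combine 0 qJ 0)) ∧
        pI = appI Λ (combine 0 qJ 0) := by
  rw [GammaZero, appJ_combine, eq_comm (a := pJ), ← eq_sub_iff_add_eq',
    Matrix.mulVec_eq_iff_eq_mulVec_of_mul_eq_one hinv1 hinv2]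

theorem syndrome_table_unique_solution_general
    {F : Type*} [Field F]
    {I J L : Type*} [Fintype I] [Fintype J] [Fintype L]
    [DecidableEq I] [DecidableEq J] [DecidableEq L]
    (Λ : Matrix (I ⊕ J ⊕ L) (I ⊕ J ⊕ L) F)
    (Λbar : Matrix (I ⊕ L) J F)
    (hinv1 : blockJIL Λ * Λbar = 1) (hinv2 : Λbar * blockJIL Λ = 1) :
    ∀ pJ qJ : J → F,
      GammaZero Λ pJ qJ
        (fun l => Λbar.mulVec (pJ - appJ Λ (combine 0 qJ 0)) (Sum.inr l))
        (appI Λ (combine 0 qJ 0))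
        (fun i => Λbar.mulVec (pJ - appJ Λ (combine 0 qJ 0)) (Sum.inl i)) ∧
      ∀ (qL : L → F) (pI qI : I → F), GammaZero Λ pJ qJ qL pI qI →
        pI = appI Λ (combine 0 qJ 0) ∧
        qI = (fun i => Λbar.mulVec (pJ - appJ Λ (combine 0 qJ 0)) (Sum.inl i)) ∧
        qL = (fun l => Λbar.mulVec (pJ - appJ Λ (combine 0 qJ 0)) (Sum.inr l)) := by
  intro pJ qJ
  refine ⟨(gammaZero_iff_of_mul_eq_one hinv1 hinv2).2
    ⟨Sum.elim_comp_inl_inr (Λbar *ᵥ _), rfl⟩, ?_⟩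
  intro qL pI qI hγ
  obtain ⟨hsol, hpI⟩ := (gammaZero_iff_of_mul_eq_one hinv1 hinv2).1 hγ
  exact ⟨hpI, congrArg (· ∘ Sum.inl) hsol, congrArg (· ∘ Sum.inr) hsol⟩

/-- Lemma lem-a-1, part 1. For an admissible graph `Λ` (with
explicit inverse `Λbar` of the block `Λ^J_{IL}`), every `ξ^J = (p^J,q^J)` admits a
solution `(q^L, ξ^I)` of `γ_Λ(ξ^J,q^L,ξ^I) = 0`; the solution is unique and is given
by `(q^I,q^L) = Λ̄^{IL}_J(p^J - Λ^J_J q^J)` and `p^I = Λ^I_J q^J`. -/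
theorem syndrome_table_unique_solution
    {F : Type*} [Field F] [Fintype F] [DecidableEq F]
    {I J L : Type*} [Fintype I] [Fintype J] [Fintype L]
    [DecidableEq I] [DecidableEq J] [DecidableEq L]
    (Λ : Matrix (I ⊕ J ⊕ L) (I ⊕ J ⊕ L) F) (hsymm : Λ.IsSymm)
    (Λbar : Matrix (I ⊕ L) J F)
    (hinv1 : blockJIL Λ * Λbar = 1) (hinv2 : Λbar * blockJIL Λ = 1)
    (hzero : ∀ a b : I ⊕ L, Λ (embIL a) (embIL b) = 0) :
    ∀ pJ qJ : J → F,
      GammaZero Λ pJ qJ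
        (fun l => Λbar.mulVec (pJ - appJ Λ (combine 0 qJ 0)) (Sum.inr l))
        (appI Λ (combine 0 qJ 0))
        (fun i => Λbar.mulVec (pJ - appJ Λ (combine 0 qJ 0)) (Sum.inl i)) ∧
      ∀ (qL : L → F) (pI qI : I → F), GammaZero Λ pJ qJ qL pI qI →
        pI = appI Λ (combine 0 qJ 0) ∧
        qI = (fun i => Λbar.mulVec (pJ - appJ Λ (combine 0 qJ 0)) (Sum.inl i)) ∧
        qL = (fun l => Λbar.mulVec (pJ - appJ Λ (combine 0 qJ 0)) (Sum.inr l)) :=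
  syndrome_table_unique_solution_general Λ Λbar hinv1 hinv2
end
end

section
/- Let Λ be an admissible graph that is associated with a t-error-correcting code. If γ_Λ(ξ₁^J,q^L,ξ₁^I) = 0 and γ_Λ(ξ₂^J,q^L,ξ₂^I) = 0 hold for phase-space points ξ₁^J, ξ₂^J ∈ Ξ^J of weight at most t, the same syndrome q^L ∈ F^L, and ξ₁^I, ξ₂^I ∈ Ξ^I, then ξ₁^I = ξ₂^I. -/
open scoped BigOperators

noncomputable section

variable {F : Type*} [Field F] [Fintype F] [DecidableEq F]

variable {I J L : Type*} [Fintype I] [Fintype J] [Fintype L]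
  [DecidableEq I] [DecidableEq J] [DecidableEq L]

/-! The syndrome-table condition is linear, so the difference of two solutions with the same
syndrome solves it with syndrome `0`, and its output part has weight at most `2t`. The code
property then forces the difference of the corrections to vanish. -/

lemma combine_sub {F I J L : Type*} [Sub F] (a a' : I → F) (b b' : J → F) (c c' : L → F) :
    combine a b c - combine a' b' c' = combine (a - a') (b - b') (c - c') := by
  funext x
  rcases x with i | j | l <;> rfl

section

variable {F : Type*} [Field F] {I J L : Type*} [Fintype I] [Fintype J] [Fintype L]

lemma appJ_sub (Λ : Matrix (I ⊕ J ⊕ L) (I ⊕ J ⊕ L) F) (v w : I ⊕ J ⊕ L → F) :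
    appJ Λ (v - w) = appJ Λ v - appJ Λ w :=
  funext fun j => congrFun (Λ.mulVec_sub v w) (inJ j)

lemma appI_sub (Λ : Matrix (I ⊕ J ⊕ L) (I ⊕ J ⊕ L) F) (v w : I ⊕ J ⊕ L → F) :
    appI Λ (v - w) = appI Λ v - appI Λ w :=
  funext fun i => congrFun (Λ.mulVec_sub v w) (inI i)

lemma GammaZero.sub {Λ : Matrix (I ⊕ J ⊕ L) (I ⊕ J ⊕ L) F} {pJ₁ qJ₁ pJ₂ qJ₂ : J → F}
    {qL : L → F} {pI₁ qI₁ pI₂ qI₂ : I → F}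
    (h₁ : GammaZero Λ pJ₁ qJ₁ qL pI₁ qI₁) (h₂ : GammaZero Λ pJ₂ qJ₂ qL pI₂ qI₂) :
    GammaZero Λ (pJ₁ - pJ₂) (qJ₁ - qJ₂) 0 (pI₁ - pI₂) (qI₁ - qI₂) := by
  obtain ⟨hpJ₁, hpI₁⟩ := h₁
  obtain ⟨hpJ₂, hpI₂⟩ := h₂
  constructor
  · rw [hpJ₁, hpJ₂, ← appJ_sub, combine_sub, sub_self]
  · rw [hpI₁, hpI₂, ← appI_sub, combine_sub, sub_self, sub_self]

variable [DecidableEq F]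

lemma wt_sub_le (p₁ q₁ p₂ q₂ : J → F) : wt (p₁ - p₂) (q₁ - q₂) ≤ wt p₁ q₁ + wt p₂ q₂ := by
  classical
  unfold wt
  refine (Finset.card_le_card fun j hj => ?_).trans (Finset.card_union_le _ _)
  contrapose! hj
  simp_all

lemma TCode.eq_zero_of_gammaZero {Λ : Matrix (I ⊕ J ⊕ L) (I ⊕ J ⊕ L) F} {t : ℕ}
    (hcode : TCode Λ t) {pJ qJ : J → F} {pI qI : I → F} (hwt : wt pJ qJ ≤ 2 * t)
    (hγ : GammaZero Λ pJ qJ 0 pI qI) : pI = 0 ∧ qI = 0 := by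
  obtain ⟨hpJ, hpI⟩ := hγ
  have hvanish : ∀ j ∉ Finset.univ.filter fun j => ¬(pJ j = 0 ∧ qJ j = 0),
      pJ j = 0 ∧ qJ j = 0 := by
    simp
  obtain ⟨hqI, hqJ⟩ := hcode _ hwt qI qJ (fun j hj => (hvanish j hj).2)
    (fun j hj => by rw [← hpJ]; exact (hvanish j hj).1)
  exact ⟨hpI.trans hqJ, hqI⟩

end

theorem syndrome_determines_correction_general
    {F : Type*} [Field F] [DecidableEq F]
    {I J L : Type*} [Fintype I] [Fintype J] [Fintype L]
    (Λ : Matrix (I ⊕ J ⊕ L) (I ⊕ J ⊕ L) F)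
    (t : ℕ) (hcode : TCode Λ t) :
    ∀ (pJ₁ qJ₁ pJ₂ qJ₂ : J → F) (qL : L → F) (pI₁ qI₁ pI₂ qI₂ : I → F),
      wt pJ₁ qJ₁ ≤ t → wt pJ₂ qJ₂ ≤ t →
      GammaZero Λ pJ₁ qJ₁ qL pI₁ qI₁ → GammaZero Λ pJ₂ qJ₂ qL pI₂ qI₂ →
      pI₁ = pI₂ ∧ qI₁ = qI₂ := by
  intro pJ₁ qJ₁ pJ₂ qJ₂ qL pI₁ qI₁ pI₂ qI₂ hwt₁ hwt₂ hγ₁ hγ₂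
  have hwt : wt (pJ₁ - pJ₂) (qJ₁ - qJ₂) ≤ 2 * t := (wt_sub_le _ _ _ _).trans (by omega)
  obtain ⟨hp, hq⟩ := hcode.eq_zero_of_gammaZero hwt (hγ₁.sub hγ₂)
  exact ⟨sub_eq_zero.mp hp, sub_eq_zero.mp hq⟩

/-- Lemma lem-a-1, part 2. For an admissible graph `Λ` associated
with a `t`-error correcting code, two solutions of the syndrome-table condition with
the same syndrome `q^L` and with `ξ₁^J, ξ₂^J` of weight at most `t` have the same
correction `ξ^I`. -/
theorem syndrome_determines_correction
    {F : Type*} [Field F] [Fintype F] [DecidableEq F]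
    {I J L : Type*} [Fintype I] [Fintype J] [Fintype L]
    [DecidableEq I] [DecidableEq J] [DecidableEq L]
    (Λ : Matrix (I ⊕ J ⊕ L) (I ⊕ J ⊕ L) F) (hΛ : Admissible Λ)
    (t : ℕ) (hcode : TCode Λ t) :
    ∀ (pJ₁ qJ₁ pJ₂ qJ₂ : J → F) (qL : L → F) (pI₁ qI₁ pI₂ qI₂ : I → F),
      wt pJ₁ qJ₁ ≤ t → wt pJ₂ qJ₂ ≤ t →
      GammaZero Λ pJ₁ qJ₁ qL pI₁ qI₁ → GammaZero Λ pJ₂ qJ₂ qL pI₂ qI₂ →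
      pI₁ = pI₂ ∧ qI₁ = qI₂ :=
  syndrome_determines_correction_general Λ t hcode
end
end

section
/- Let Λ be an admissible graph. Then the graph-code operators satisfy v_{[Λ,q^L]}^* v_{[Λ,q'^L]} = δ_{q^L,q'^L}·1_{H_I} for all q^L, q'^L ∈ F^L, and Σ_{q^L∈F^L} v_{[Λ,q^L]} v_{[Λ,q^L]}^* = 1_{H_J}; in particular each v_{[Λ,q^L]} is an isometry, the family (v_{[Λ,q^L]})_{q^L∈F^L} is a complete family of mutually orthogonal isometries from H_I to H_J, and |J| = |I| + |L|. -/
open scoped BigOperators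

noncomputable section

variable {F : Type*} [Field F] [Fintype F] [DecidableEq F]

variable {I J L : Type*} [Fintype I] [Fintype J] [Fintype L]
  [DecidableEq I] [DecidableEq J] [DecidableEq L]

/-!
Write `T_{q^L}` for the kernel `(q^J, q^I) ↦ τ(Λ, q^{IJL})` of `v_{[Λ,q^L]}`. Everything reduces
to the two Gram identities `T_{q^L}ᴴ T_{q'^L} = δ_{q^L,q'^L} d^{|J|}` and
`Σ_{q^L} T_{q^L} T_{q^L}ᴴ = d^{|I|+|L|}`, which are character sums: by the cocycle law,
`conj τ(q) τ(q + r) = τ(r) ε(⟨Λq, r⟩)`. Shifting `q` by a difference `r` supported on `I ∪ L`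
(resp. on `J`), the vanishing block `Λ^{IL}_{IL} = 0` makes `⟨Λq, r⟩` affine in the summation
variable, with linear part `Λ^J_{IL}` (resp. its transpose) applied to the difference. Since
`Λ^J_{IL}` is invertible, the character sum vanishes unless the difference does; invertibility
also gives `|J| = |I| + |L|`.
-/

open Matrix

lemma Matrix.IsSymm.mulVec_dotProduct {n R : Type*} [Fintype n] [CommSemiring R]
    {A : Matrix n n R} (hA : A.IsSymm) (u v : n → R) : A *ᵥ u ⬝ᵥ v = u ⬝ᵥ A *ᵥ v := by
  rw [dotProduct_mulVec, ← mulVec_transpose, hA.eq]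

lemma Fintype.sum_sum_sumElim {α β γ M : Type*} [Fintype α] [Fintype β] [DecidableEq α]
    [DecidableEq β] [Fintype γ] [AddCommMonoid M] (f : (α ⊕ β → γ) → M) :
    ∑ b : β → γ, ∑ a : α → γ, f (Sum.elim a b) = ∑ x, f x :=
  (Fintype.sum_prod_type_right' fun a b => f (Sum.elim a b)).symm.trans
    (Fintype.sum_equiv (Equiv.sumArrowEquivProdArrow α β γ).symm _ _ fun _ => rfl)

namespace IsCharacter

variable {F : Type*} [Field F] {ε : F → ℂ}

lemma map_zero (hε : IsCharacter ε) : ε 0 = 1 := by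
  have h0 : ε 0 ≠ 0 := fun h => by simpa [h] using hε.2.1 0
  simpa [h0] using hε.2.2 0 0

lemma map_ne_one (hε : IsCharacter ε) {a : F} (ha : a ≠ 0) : ε a ≠ 1 :=
  fun h => ha (hε.1 (h.trans hε.map_zero.symm))

def toAddChar (hε : IsCharacter ε) : AddChar F ℂ where
  toFun := ε
  map_zero_eq_one' := hε.map_zero
  map_add_eq_mul' := hε.2.2

lemma chi_eq {K : Type*} [Fintype K] (hε : IsCharacter ε) (p q : K → F) :
    chi ε p q = ε (p ⬝ᵥ q) :=
  (map_prod hε.toAddChar.toMonoidHom (fun k => Multiplicative.ofAdd (p k * q k)) _).symm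

variable {K : Type*} [Fintype K] [DecidableEq K]

def dotProductChar (hε : IsCharacter ε) (m : K → F) : AddChar (K → F) ℂ where
  toFun q := ε (q ⬝ᵥ m)
  map_zero_eq_one' := by simp [hε.map_zero]
  map_add_eq_mul' q q' := by simp [add_dotProduct, hε.2.2]

lemma sum_dotProduct [Fintype F] [DecidableEq F] (hε : IsCharacter ε) (m : K → F) :
    ∑ q : K → F, ε (q ⬝ᵥ m) = if m = 0 then (Fintype.card F : ℂ) ^ Fintype.card K else 0 := by
  have hzero : hε.dotProductChar m = 0 ↔ m = 0 := by
    refine ⟨fun h => funext fun k => ?_, fun h => AddChar.eq_zero_iff.2 fun q => ?_⟩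
    · by_contra hk
      have := AddChar.eq_zero_iff.1 h (Pi.single k 1)
      exact hε.map_ne_one hk (by simpa [dotProductChar] using this)
    · simp [dotProductChar, h, hε.map_zero]
  classical
  have := (hε.dotProductChar m).sum_eq_ite
  simp only [hzero] at this
  simpa [dotProductChar] using this

end IsCharacter

section Adjoint

variable {F : Type*} [Fintype F] {K M : Type*} [Fintype K] [Fintype M] [DecidableEq K]
  [DecidableEq M]

lemma hinner_eq_dotProduct (ψ φ : HS F K) :
    hinner ψ φ = ((Fintype.card F : ℂ) ^ Fintype.card K)⁻¹ * (star ψ ⬝ᵥ φ) := rfl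

lemma hAdj_toLin' [DecidableEq F] (A : Matrix (M → F) (K → F) ℂ) :
    hAdj (toLin' A) = toLin' (((Fintype.card F : ℂ) ^ Fintype.card K *
      ((Fintype.card F : ℂ) ^ Fintype.card M)⁻¹) • Aᴴ) := by
  refine LinearMap.ext fun φ => funext fun qK => ?_
  have hδ : (deltaV qK : HS F K) = Pi.single qK 1 := by
    ext q; simp [deltaV, Pi.single_apply]
  simp only [hAdj, kernelMap, hδ, toLin'_apply, mulVec_single_one, LinearMap.coe_mk,
    AddHom.coe_mk]
  simp [mulVec, dotProduct, mul_assoc]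

lemma hinner_hAdj [DecidableEq F] [Nonempty F] (A : HS F K →ₗ[ℂ] HS F M) (ψ : HS F K)
    (φ : HS F M) :
    hinner (A ψ) φ = hinner ψ (hAdj A φ) := by
  obtain ⟨A, rfl⟩ := toLin'.surjective A
  have hd : (Fintype.card F : ℂ) ≠ 0 := by exact_mod_cast Fintype.card_ne_zero
  rw [hAdj_toLin', hinner_eq_dotProduct, hinner_eq_dotProduct, toLin'_apply, toLin'_apply,
    smul_mulVec, dotProduct_smul, star_mulVec, ← dotProduct_mulVec, smul_eq_mul]
  field_simp

end Adjoint

section Configurations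

lemma combine_zero {F I J L : Type*} [Zero F] :
    combine (0 : I → F) (0 : J → F) (0 : L → F) = 0 := by
  ext (i | j | l) <;> rfl

lemma combine_add {F I J L : Type*} [Add F] (a a' : I → F) (b b' : J → F) (c c' : L → F) :
    combine a b c + combine a' b' c' = combine (a + a') (b + b') (c + c') := by
  ext (i | j | l) <;> rfl

variable {F : Type*} [Field F] {I J L : Type*} [Fintype I] [Fintype J] [Fintype L]

lemma combine_dotProduct_combine (a a' : I → F) (b b' : J → F) (c c' : L → F) :
    combine a b c ⬝ᵥ combine a' b' c' = a ⬝ᵥ a' + b ⬝ᵥ b' + c ⬝ᵥ c' := by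
  simp [combine, dotProduct, Fintype.sum_sum_type, add_assoc]

variable {Λ : Matrix (I ⊕ J ⊕ L) (I ⊕ J ⊕ L) F}

lemma mulVec_combine_zero_mid (hz : ∀ a b : I ⊕ L, Λ (embIL a) (embIL b) = 0)
    (xI : I → F) (xL : L → F) :
    Λ *ᵥ combine xI 0 xL = combine 0 (blockJIL Λ *ᵥ Sum.elim xI xL) 0 := by
  simp only [Sum.forall, embIL, Sum.elim_inl, Sum.elim_inr, inI, inL] at hz
  ext (i | j | l) <;>
    simp [combine, mulVec, dotProduct, Fintype.sum_sum_type, blockJIL, embIL, inI, inL, inJ, hz]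

namespace Admissible

variable [DecidableEq I] [DecidableEq J] [DecidableEq L]

lemma mulVec_blockJIL_eq_zero_iff (hΛ : Admissible Λ) {x : I ⊕ L → F} :
    blockJIL Λ *ᵥ x = 0 ↔ x = 0 := by
  obtain ⟨B, -, hB⟩ := hΛ.2.1
  refine ⟨fun hx => ?_, fun hx => by rw [hx, mulVec_zero]⟩
  simpa [mulVec_mulVec, hB] using congrArg (B *ᵥ ·) hx

lemma vecMul_blockJIL_eq_zero_iff (hΛ : Admissible Λ) {y : J → F} :
    y ᵥ* blockJIL Λ = 0 ↔ y = 0 := by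
  obtain ⟨B, hB, -⟩ := hΛ.2.1
  refine ⟨fun hy => ?_, fun hy => by rw [hy, zero_vecMul]⟩
  simpa [vecMul_vecMul, hB] using congrArg (· ᵥ* B) hy

lemma card_eq_card_sum (hΛ : Admissible Λ) : Fintype.card J = Fintype.card (I ⊕ L) := by
  obtain ⟨B, hB, hB'⟩ := hΛ.2.1
  exact square_of_invertible _ _ hB hB'

end Admissible

variable {ε : F → ℂ} {tau : (I ⊕ J ⊕ L → F) → ℂ}

namespace IsTau

lemma star_mul_self (htau : IsTau ε Λ tau) (q : I ⊕ J ⊕ L → F) : star (tau q) * tau q = 1 := by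
  simpa [htau.1 q] using Complex.conj_mul' (tau q)

lemma map_zero (hε : IsCharacter ε) (htau : IsTau ε Λ tau) : tau 0 = 1 := by
  have h := htau.2 0 0
  rw [add_zero, hε.chi_eq, dotProduct_zero, hε.map_zero, mul_one] at h
  have hne : tau 0 ≠ 0 := fun h0 => by simpa [h0] using htau.1 0
  exact mul_left_cancel₀ hne (h.symm.trans (mul_one _).symm)

lemma star_mul_add (hε : IsCharacter ε) (htau : IsTau ε Λ tau) (q r : I ⊕ J ⊕ L → F) :
    star (tau q) * tau (q + r) = tau r * ε (Λ *ᵥ q ⬝ᵥ r) := by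
  rw [htau.2, hε.chi_eq]
  linear_combination (tau r * ε (Λ *ᵥ q ⬝ᵥ r)) * htau.star_mul_self q

end IsTau

end Configurations

lemma rnorm_sq_mul_card_pow (F : Type*) [Fintype F] [Nonempty F] (n : ℕ) :
    rnorm F n ^ 2 * (Fintype.card F : ℂ) ^ n = 1 := by
  have hd : (0 : ℝ) < Fintype.card F := by exact_mod_cast Fintype.card_pos
  have h : ((Fintype.card F : ℝ) ^ (-(n : ℝ) / 2)) ^ 2 * (Fintype.card F : ℝ) ^ n = 1 := by
    rw [← Real.rpow_natCast _ 2, ← Real.rpow_mul hd.le, ← Real.rpow_natCast _ n,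
      ← Real.rpow_add hd]
    norm_num
  unfold rnorm
  exact_mod_cast h

lemma star_rnorm (F : Type*) [Fintype F] (n : ℕ) : star (rnorm F n) = rnorm F n :=
  Complex.conj_ofReal _

section GraphCodeKernel

variable {F : Type*} [Fintype F] [DecidableEq F] {I J L : Type*} [Fintype I] [DecidableEq I]
  {tau : (I ⊕ J ⊕ L → F) → ℂ}

def gcodeKernel (tau : (I ⊕ J ⊕ L → F) → ℂ) (qL : L → F) : Matrix (J → F) (I → F) ℂ :=
  Matrix.of fun qJ qI => tau (combine qI qJ qL)

lemma gcode_eq_toLin' (qL : L → F) :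
    gcode tau qL = toLin' (rnorm F (Fintype.card I) • gcodeKernel tau qL) :=
  rfl

lemma hAdj_gcode [Fintype J] [DecidableEq J] (qL : L → F) :
    hAdj (gcode tau qL) = toLin' (((Fintype.card F : ℂ) ^ Fintype.card I *
      ((Fintype.card F : ℂ) ^ Fintype.card J)⁻¹ * rnorm F (Fintype.card I)) •
        (gcodeKernel tau qL)ᴴ) := by
  rw [gcode_eq_toLin', hAdj_toLin', conjTranspose_smul, star_rnorm, smul_smul]

variable [Nonempty F] [Fintype J] [DecidableEq J]

lemma hAdj_gcode_comp_gcode (qL qL' : L → F) :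
    hAdj (gcode tau qL) ∘ₗ gcode tau qL' =
      toLin' (((Fintype.card F : ℂ) ^ Fintype.card J)⁻¹ •
        ((gcodeKernel tau qL)ᴴ * gcodeKernel tau qL')) := by
  rw [hAdj_gcode, gcode_eq_toLin', ← toLin'_mul, Matrix.smul_mul, Matrix.mul_smul, smul_smul]
  congr 2
  have hd : (Fintype.card F : ℂ) ≠ 0 := by exact_mod_cast Fintype.card_ne_zero
  field_simp
  linear_combination rnorm_sq_mul_card_pow F (Fintype.card I)

lemma gcode_comp_hAdj_gcode (qL : L → F) :
    gcode tau qL ∘ₗ hAdj (gcode tau qL) =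
      toLin' (((Fintype.card F : ℂ) ^ Fintype.card J)⁻¹ •
        (gcodeKernel tau qL * (gcodeKernel tau qL)ᴴ)) := by
  rw [hAdj_gcode, gcode_eq_toLin', ← toLin'_mul, Matrix.smul_mul, Matrix.mul_smul, smul_smul]
  congr 2
  have hd : (Fintype.card F : ℂ) ≠ 0 := by exact_mod_cast Fintype.card_ne_zero
  field_simp
  linear_combination rnorm_sq_mul_card_pow F (Fintype.card I)

end GraphCodeKernel

section GramIdentities

variable {F : Type*} [Field F] [Fintype F] [DecidableEq F] {I J L : Type*} [Fintype I]
  [Fintype J] [Fintype L] [DecidableEq I] [DecidableEq J] [DecidableEq L]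
  {ε : F → ℂ} {Λ : Matrix (I ⊕ J ⊕ L) (I ⊕ J ⊕ L) F} {tau : (I ⊕ J ⊕ L → F) → ℂ}

lemma sum_star_tau_mul_tau (hε : IsCharacter ε) (hΛ : Admissible Λ) (htau : IsTau ε Λ tau)
    (qI qI' : I → F) (qL qL' : L → F) :
    ∑ qJ : J → F, star (tau (combine qI qJ qL)) * tau (combine qI' qJ qL') =
      if qI = qI' ∧ qL = qL' then (Fintype.card F : ℂ) ^ Fintype.card J else 0 := by
  set r := combine (qI' - qI) 0 (qL' - qL)
  set x := Sum.elim (qI' - qI) (qL' - qL)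
  have hshift (qJ : J → F) : combine qI' qJ qL' = combine qI qJ qL + r := by
    simp [r, combine_add]
  have hphase (qJ : J → F) : Λ *ᵥ combine qI qJ qL ⬝ᵥ r = qJ ⬝ᵥ blockJIL Λ *ᵥ x := by
    simp [r, x, hΛ.1.mulVec_dotProduct, mulVec_combine_zero_mid hΛ.2.2,
      combine_dotProduct_combine]
  have hx : x = 0 ↔ qI = qI' ∧ qL = qL' := by
    simp [x, funext_iff, Sum.forall, sub_eq_zero, eq_comm]
  simp_rw [hshift, htau.star_mul_add hε, hphase]
  rw [← Finset.mul_sum, hε.sum_dotProduct]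
  simp only [hΛ.mulVec_blockJIL_eq_zero_iff, hx]
  split_ifs with h
  · obtain ⟨rfl, rfl⟩ := h
    simp [r, combine_zero, htau.map_zero hε]
  · rw [mul_zero]

lemma sum_sum_tau_mul_star_tau (hε : IsCharacter ε) (hΛ : Admissible Λ)
    (htau : IsTau ε Λ tau) (qJ qJ' : J → F) :
    ∑ qL : L → F, ∑ qI : I → F, tau (combine qI qJ qL) * star (tau (combine qI qJ' qL)) =
      if qJ = qJ' then (Fintype.card F : ℂ) ^ Fintype.card (I ⊕ L) else 0 := by
  set r := combine 0 (qJ - qJ') 0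
  set c := combine 0 qJ' 0 ⬝ᵥ Λ *ᵥ r
  set n := (qJ - qJ') ᵥ* blockJIL Λ
  have hshift (qI : I → F) (qL : L → F) : combine qI qJ qL = combine qI qJ' qL + r := by
    simp [r, combine_add]
  have hphase (qI : I → F) (qL : L → F) :
      Λ *ᵥ combine qI qJ' qL ⬝ᵥ r = Sum.elim qI qL ⬝ᵥ n + c := by
    have hsplit : combine qI qJ' qL = combine qI 0 qL + combine 0 qJ' 0 := by
      simp [combine_add]
    rw [hsplit, mulVec_add, add_dotProduct, mulVec_combine_zero_mid hΛ.2.2,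
      hΛ.1.mulVec_dotProduct (combine 0 qJ' 0), combine_dotProduct_combine]
    simp only [dotProduct_zero, zero_add, add_zero]
    rw [dotProduct_comm _ (qJ - qJ'), dotProduct_mulVec (qJ - qJ'), dotProduct_comm]
  have hterm (qI : I → F) (qL : L → F) :
      tau (combine qI qJ qL) * star (tau (combine qI qJ' qL)) =
        tau r * ε c * ε (Sum.elim qI qL ⬝ᵥ n) := by
    rw [mul_comm, hshift, htau.star_mul_add hε, hphase, hε.2.2]
    ring
  simp_rw [hterm]
  rw [Fintype.sum_sum_sumElim (fun x => tau r * ε c * ε (x ⬝ᵥ n)), ← Finset.mul_sum,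
    hε.sum_dotProduct]
  simp only [n, hΛ.vecMul_blockJIL_eq_zero_iff, sub_eq_zero]
  split_ifs with h
  · subst h
    simp [r, c, combine_zero, htau.map_zero hε, hε.map_zero]
  · rw [mul_zero]

lemma gcodeKernel_conjTranspose_mul (hε : IsCharacter ε) (hΛ : Admissible Λ)
    (htau : IsTau ε Λ tau) (qL qL' : L → F) :
    (gcodeKernel tau qL)ᴴ * gcodeKernel tau qL' =
      if qL = qL' then ((Fintype.card F : ℂ) ^ Fintype.card J) • 1 else 0 := by
  ext qI qI'
  simp only [mul_apply, conjTranspose_apply, gcodeKernel, of_apply,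
    sum_star_tau_mul_tau hε hΛ htau]
  split_ifs <;> simp_all [one_apply]

lemma sum_gcodeKernel_mul_conjTranspose (hε : IsCharacter ε) (hΛ : Admissible Λ)
    (htau : IsTau ε Λ tau) :
    ∑ qL : L → F, gcodeKernel tau qL * (gcodeKernel tau qL)ᴴ =
      ((Fintype.card F : ℂ) ^ Fintype.card (I ⊕ L)) • 1 := by
  ext qJ qJ'
  simp only [Matrix.sum_apply, mul_apply, conjTranspose_apply, gcodeKernel, of_apply,
    sum_sum_tau_mul_star_tau hε hΛ htau, Matrix.smul_apply, one_apply]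
  split_ifs <;> simp

end GramIdentities

/-- For an admissible graph `Λ`, the graph code operators satisfy
`v_{[Λ,q^L]}^* v_{[Λ,q'^L]} = δ_{q^L,q'^L} 1`, `Σ_{q^L} v_{[Λ,q^L]} v_{[Λ,q^L]}^* = 1`;
in particular each `v_{[Λ,q^L]}` is an isometry, the family is a complete family of
mutually orthogonal isometries, and `|J| = |I| + |L|`. (Here `hAdj` is the adjoint
with respect to the Haar-normalized inner products, as certified by the first
conjunct.) -/
theorem gcode_complete_family_of_isometries
    {F : Type*} [Field F] [Fintype F] [DecidableEq F]
    {I J L : Type*} [Fintype I] [Fintype J] [Fintype L]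
    [DecidableEq I] [DecidableEq J] [DecidableEq L]
    (ε : F → ℂ) (hε : IsCharacter ε)
    (Λ : Matrix (I ⊕ J ⊕ L) (I ⊕ J ⊕ L) F) (hΛ : Admissible Λ)
    (tau : ((I ⊕ J ⊕ L) → F) → ℂ) (htau : IsTau ε Λ tau) :
    (∀ (qL : L → F) (ψ : HS F I) (φ : HS F J),
      hinner (gcode tau qL ψ) φ = hinner ψ (hAdj (gcode tau qL) φ)) ∧
    (∀ qL qL' : L → F,
      hAdj (gcode tau qL) ∘ₗ gcode tau qL'
        = if qL = qL' then LinearMap.id else 0) ∧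
    ((∑ qL : L → F, gcode tau qL ∘ₗ hAdj (gcode tau qL)) = LinearMap.id) ∧
    (∀ (qL : L → F) (ψ φ : HS F I),
      hinner (gcode tau qL ψ) (gcode tau qL φ) = hinner ψ φ) ∧
    Fintype.card J = Fintype.card I + Fintype.card L := by
  have hcard := hΛ.card_eq_card_sum
  have hdJ : ((Fintype.card F : ℂ) ^ Fintype.card J) ≠ 0 :=
    pow_ne_zero _ (by exact_mod_cast Fintype.card_ne_zero)
  have horth (qL qL' : L → F) : hAdj (gcode tau qL) ∘ₗ gcode tau qL' =
      if qL = qL' then LinearMap.id else 0 := by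
    rw [hAdj_gcode_comp_gcode, gcodeKernel_conjTranspose_mul hε hΛ htau]
    split_ifs
    · rw [smul_smul, inv_mul_cancel₀ hdJ, one_smul, toLin'_one]
    · rw [smul_zero, map_zero]
  refine ⟨fun qL => hinner_hAdj _, horth, ?_, fun qL ψ φ => ?_, by simpa using hcard⟩
  · simp_rw [gcode_comp_hAdj_gcode]
    rw [← map_sum, ← Finset.smul_sum, sum_gcodeKernel_mul_conjTranspose hε hΛ htau, smul_smul,
      ← hcard, inv_mul_cancel₀ hdJ, one_smul, toLin'_one]
  · rw [hinner_hAdj, ← LinearMap.comp_apply, horth, if_pos rfl, LinearMap.id_apply]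
end
end
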